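/- A polynomial p in x = (x_1,...,x_g) and h = (h_1,...,h_g) is the nc directional derivative of some nc analytic polynomial if and only if every monomial of p has degree exactly one in h and, whenever a monomial m occurs in p, every monomial 1-differentially wed to m also occurs in p with the same coefficient. -/

import Mathlib

/-!
The coefficient of a word `w` in `f'(x)[h]` is `0` unless `w` has degree one in `h`, in which
case it is the coefficient in `f` of `w[h_i → x_i]`: the words of the derivative of a monomial
`u` are exactly the one-letter `h`-markings of `u`, each occurring once. Hence derivatives satisfy
both conditions. Conversely, if `p` satisfies them, then `p = f'` for the `f` whose coefficient
at `u` is the coefficient in `p` of `u` with its first letter marked.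
-/

/-- Letters: `Sum.inl i` is the variable `x_i`, `Sum.inr i` the direction variable `h_i`. -/
abbrev AV (g : ℕ) := Fin g ⊕ Fin g

/-- Forget the `h`-marking of a letter (`h_i ↦ x_i`). -/
def flatA {g : ℕ} : AV g → Fin g := Sum.elim id id

/-- The monomial `w` has degree exactly one in `h`. -/
def OneH {g : ℕ} (w : FreeMonoid (AV g)) : Prop :=
  (FreeMonoid.toList w).countP (fun a : AV g => a.isRight) = 1

/-- Two monomials, each of degree one in `h`, are 1-differentially wed:
`m[h_i → x_i] = m̃[h_j → x_j]`, i.e. they agree after replacing the `h`-factor by the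
corresponding `x`-factor. -/
def Wed1 {g : ℕ} (w w' : FreeMonoid (AV g)) : Prop :=
  OneH w ∧ OneH w' ∧
    (FreeMonoid.toList w).map flatA = (FreeMonoid.toList w').map flatA

/-- The nc directional derivative of a single nc analytic monomial (word) `l` in `x`:
the sum over positions `k` of the word with the `k`-th factor `x_i` replaced by `h_i`. -/
noncomputable def derivWord {g : ℕ} (l : List (Fin g)) :
    MonoidAlgebra ℝ (FreeMonoid (AV g)) :=
  ∑ k : Fin l.length,
    MonoidAlgebra.single
      (FreeMonoid.ofList (List.ofFn fun i : Fin l.length =>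
        if i = k then (Sum.inr (l.get i) : AV g) else Sum.inl (l.get i))) 1

/-- The nc directional derivative `f'(x)[h] = d/dt f(x+th)|_{t=0}` of an nc analytic
polynomial `f(x)`, extended linearly from monomials. -/
noncomputable def dirDerivM {g : ℕ} (f : MonoidAlgebra ℝ (FreeMonoid (Fin g))) :
    MonoidAlgebra ℝ (FreeMonoid (AV g)) :=
  ∑ l ∈ f.coeff.support, f.coeff l • derivWord (FreeMonoid.toList l)

lemma Multiset.count_map_cons_cons {β : Type*} [DecidableEq β] (a b : β)
    (s : Multiset (List β)) (w : List β) :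
    (s.map (a :: ·)).count (b :: w) = if b = a then s.count w else 0 := by
  split_ifs with h
  · subst h
    exact Multiset.count_map_eq_count' _ _ List.cons_injective _
  · simp [Ne.symm h]

lemma MonoidAlgebra.coeff_sum_map_single_ofList {R β : Type*} [Semiring R] [DecidableEq β]
    (s : Multiset (List β)) (w : FreeMonoid β) :
    ((s.map fun u => MonoidAlgebra.single (FreeMonoid.ofList u) (1 : R)).sum).coeff w =
      s.count w.toList := by
  induction s using Multiset.induction_on with
  | empty => simp
  | cons u s ih =>
    classical
    rw [Multiset.map_cons, Multiset.sum_cons, MonoidAlgebra.coeff_add, Finsupp.add_apply, ih,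
      Multiset.count_cons, MonoidAlgebra.coeff_single, Finsupp.single_apply, Nat.cast_add,
      add_comm]
    simp only [← FreeMonoid.toList_symm, FreeMonoid.toList.symm_apply_eq, eq_comm, Nat.cast_ite,
      Nat.cast_one, Nat.cast_zero]

section Markings

variable {α : Type*}

def hMarkings : List α → Multiset (List (α ⊕ α))
  | [] => 0
  | a :: l => (Sum.inr a :: l.map Sum.inl) ::ₘ (hMarkings l).map (Sum.inl a :: ·)

def markHead : List α → List (α ⊕ α)
  | [] => []
  | a :: l => Sum.inr a :: l.map Sum.inl

lemma hMarkings_eq_map_univ (l : List α) :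
    hMarkings l = Finset.univ.val.map fun k : Fin l.length => List.ofFn fun i : Fin l.length =>
      if i = k then (Sum.inr (l.get i) : α ⊕ α) else Sum.inl (l.get i) := by
  induction l with
  | nil => simp [hMarkings]
  | cons a l ih =>
    rw [hMarkings, ih]
    simp [List.ofFn_succ, (Fin.succ_ne_zero _).symm, List.map_ofFn, Function.comp_def]

lemma countP_isRight_eq_zero_and_map_elim_iff (w : List (α ⊕ α)) (l : List α) :
    w.countP (·.isRight) = 0 ∧ w.map (Sum.elim id id) = l ↔ w = l.map Sum.inl := by
  induction w generalizing l with
  | nil => cases l <;> simp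
  | cons b w ih =>
    cases l with
    | nil => simp
    | cons a l =>
      cases b with
      | inl c =>
        simp only [List.countP_cons, Sum.isRight_inl, List.map_cons, Sum.elim_inl, id_eq,
          List.cons.injEq, Sum.inl.injEq, ← ih]
        simp [and_left_comm]
      | inr c => simp

lemma count_hMarkings [DecidableEq α] (l : List α) (w : List (α ⊕ α)) :
    (hMarkings l).count w =
      if w.countP (·.isRight) = 1 ∧ w.map (Sum.elim id id) = l then 1 else 0 := by
  induction l generalizing w with
  | nil => cases w <;> simp [hMarkings]
  | cons a l ih =>
    cases w with
    | nil => simp [hMarkings]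
    | cons b w =>
      rw [hMarkings, Multiset.count_cons, Multiset.count_map_cons_cons, ih]
      cases b with
      | inl c => by_cases h : c = a <;> simp [h]
      | inr c =>
        simp only [List.cons.injEq, Sum.inr.injEq, ← countP_isRight_eq_zero_and_map_elim_iff,
          List.countP_cons, Sum.isRight_inr, List.map_cons, Sum.elim_inr, id_eq, if_true,
          Nat.add_eq_right, and_left_comm, reduceCtorEq, if_false, zero_add]

lemma map_elim_markHead (l : List α) : (markHead l).map (Sum.elim id id) = l := by
  cases l <;> simp [markHead, List.map_map, Function.comp_def]

lemma markHead_injective : Function.Injective (markHead (α := α)) :=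
  Function.LeftInverse.injective map_elim_markHead

lemma countP_isRight_markHead {l : List α} (hl : l ≠ []) :
    (markHead l).countP (·.isRight) = 1 := by
  cases l with
  | nil => exact absurd rfl hl
  | cons a l => simp [markHead, List.countP_cons, List.countP_map, Function.comp_def]

end Markings

section Derivative

variable {g : ℕ}

instance : DecidablePred (OneH (g := g)) := fun _ => inferInstanceAs (Decidable (_ = 1))

lemma derivWord_eq_sum_hMarkings (l : List (Fin g)) :
    derivWord l =
      ((hMarkings l).map fun u => MonoidAlgebra.single (FreeMonoid.ofList u) 1).sum := by
  rw [hMarkings_eq_map_univ, Multiset.map_map]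
  rfl

lemma coeff_derivWord (l : List (Fin g)) (w : FreeMonoid (AV g)) :
    (derivWord l).coeff w = if OneH w ∧ w.toList.map flatA = l then 1 else 0 := by
  rw [derivWord_eq_sum_hMarkings, MonoidAlgebra.coeff_sum_map_single_ofList, count_hMarkings]
  push_cast
  rfl

lemma coeff_dirDerivM (f : MonoidAlgebra ℝ (FreeMonoid (Fin g))) (w : FreeMonoid (AV g)) :
    (dirDerivM f).coeff w =
      if OneH w then f.coeff (FreeMonoid.ofList (w.toList.map flatA)) else 0 := by
  classical
  simp only [dirDerivM, MonoidAlgebra.coeff_sum, Finsupp.finsetSum_apply,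
    MonoidAlgebra.coeff_smul_apply, coeff_derivWord, smul_eq_mul, mul_ite, mul_one, mul_zero]
  split_ifs with hw
  · simp_rw [and_iff_right hw, ← FreeMonoid.toList.symm_apply_eq, FreeMonoid.toList_symm]
    exact Finsupp.sum_ite_self_eq _ _
  · simp [hw]

lemma Wed1.symm {w w' : FreeMonoid (AV g)} (h : Wed1 w w') : Wed1 w' w :=
  ⟨h.2.1, h.1, h.2.2.symm⟩

lemma OneH.wed1_ofList_markHead {w : FreeMonoid (AV g)} (hw : OneH w) :
    Wed1 w (FreeMonoid.ofList (markHead (w.toList.map flatA))) := by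
  have hne : w.toList.map flatA ≠ [] := by
    intro h
    rw [OneH, List.map_eq_nil_iff.mp h] at hw
    simp at hw
  exact ⟨hw, countP_isRight_markHead hne, (map_elim_markHead _).symm⟩

lemma coeff_eq_of_wed1 {R : Type*} [Zero R] {c : FreeMonoid (AV g) →₀ R}
    (hc : ∀ w ∈ c.support, ∀ w', Wed1 w w' → c w' = c w) {w w' : FreeMonoid (AV g)}
    (h : Wed1 w w') : c w' = c w := by
  by_cases hw : w ∈ c.support
  · exact hc w hw w' h
  by_cases hw' : w' ∈ c.support
  · exact (hc w' hw' w h.symm).symm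
  · rw [Finsupp.notMem_support_iff.mp hw, Finsupp.notMem_support_iff.mp hw']

end Derivative

/-- a polynomial `p` in `x, h` is the nc directional derivative of some
nc analytic polynomial iff every monomial of `p` has degree exactly one in `h` and,
whenever a monomial occurs in `p`, every monomial 1-differentially wed to it also
occurs in `p` with the same coefficient. -/
theorem isDirectionalDerivative_iff {g : ℕ}
    (p : MonoidAlgebra ℝ (FreeMonoid (AV g))) :
    (∃ f : MonoidAlgebra ℝ (FreeMonoid (Fin g)), p = dirDerivM f)
      ↔ ((∀ w ∈ p.coeff.support, OneH w) ∧
          (∀ w ∈ p.coeff.support, ∀ w', Wed1 w w' → p.coeff w' = p.coeff w)) := by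
  constructor
  · rintro ⟨f, rfl⟩
    refine ⟨fun w hw => ?_, fun w _ w' hww' => ?_⟩
    · by_contra hw'
      exact Finsupp.mem_support_iff.mp hw (by rw [coeff_dirDerivM, if_neg hw'])
    · rw [coeff_dirDerivM, coeff_dirDerivM, if_pos hww'.1, if_pos hww'.2.1, hww'.2.2]
  · rintro ⟨hone, hwed⟩
    have hinj : Function.Injective
        (FreeMonoid.ofList ∘ markHead ∘ FreeMonoid.toList (α := Fin g)) :=
      FreeMonoid.ofList.injective.comp (markHead_injective.comp FreeMonoid.toList.injective)
    refine ⟨.ofCoeff (p.coeff.comapDomain _ hinj.injOn), MonoidAlgebra.ext (Finsupp.ext fun w => ?_)⟩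
    rw [coeff_dirDerivM]
    split_ifs with hw
    · simpa using (coeff_eq_of_wed1 hwed hw.wed1_ofList_markHead).symm
    · exact Finsupp.notMem_support_iff.mp (mt (hone w) hw)
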